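/- arXiv:1207.5842 — 2 statements merged into one kernel-verified Lean document; each statement's English description precedes it below -/
import Mathlib

section
/- For all n ≥ 1, one has ξ^{-3h} ≤ Σ_{σ∈Ω_n} |J_σ|^{h} ≤ ξ^{3h}. -/
open MeasureTheory Filter Metric

noncomputable section

/-- A cookie-cutter system on `J = [0,1]`. -/
structure CookieCutter where
  N : ℕ
  hN : 2 ≤ N
  Jsub : Fin N → Set ℝ
  f : ℝ → ℝ
  φ : Fin N → ℝ → ℝ
  c : ℝ
  γ : ℝ
  b : ℝ
  B : ℝ
  hJsub_sub : ∀ j, Jsub j ⊆ Set.Icc 0 1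
  hJsub_interval : ∀ j, ∃ u v : ℝ, u ≤ v ∧ Jsub j = Set.Icc u v
  hJsub_disj : ∀ i j, i ≠ j → Disjoint (Jsub i) (Jsub j)
  hbij : ∀ j, Set.BijOn f (Jsub j) (Set.Icc 0 1)
  hφ_maps : ∀ j, ∀ x ∈ Set.Icc (0:ℝ) 1, φ j x ∈ Jsub j
  hφ_rinv : ∀ j, ∀ x ∈ Set.Icc (0:ℝ) 1, f (φ j x) = x
  hφ_linv : ∀ j, ∀ x ∈ Jsub j, φ j (f x) = x
  hfdiff : ∀ j, ∀ x ∈ Jsub j, DifferentiableAt ℝ f x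
  hφdiff : ∀ j, ∀ x ∈ Set.Icc (0:ℝ) 1, DifferentiableAt ℝ (φ j) x
  hc : 0 < c
  hγ : γ ∈ Set.Ioc (0:ℝ) 1
  hHolder : ∀ j, ∀ x ∈ Jsub j, ∀ y ∈ Jsub j, |deriv f x - deriv f y| ≤ c * |x - y| ^ γ
  hb : IsGLB ((fun x => |deriv f x|) '' ⋃ j, Jsub j) b
  hB : IsLUB ((fun x => |deriv f x|) '' ⋃ j, Jsub j) B
  hb1 : 1 < b

namespace CookieCutter

variable (cc : CookieCutter)

/-- `φ_σ = φ_{σ_1} ∘ ⋯ ∘ φ_{σ_n}` for a word `σ`. -/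
def wordMap : List (Fin cc.N) → ℝ → ℝ
  | [] => id
  | j :: rest => cc.φ j ∘ wordMap rest

/-- The basic interval `J_σ = φ_σ(J)`. -/
def Jc (σ : List (Fin cc.N)) : Set ℝ := cc.wordMap σ '' Set.Icc 0 1

/-- The diameter `|J_σ|`. -/
def diamJ (σ : List (Fin cc.N)) : ℝ := Metric.diam (cc.Jc σ)

/-- `‖φ'_σ‖ = sup_{x ∈ J} |φ'_σ(x)|`. -/
def φnorm (σ : List (Fin cc.N)) : ℝ :=
  sSup ((fun x => |deriv (cc.wordMap σ) x|) '' Set.Icc 0 1)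

/-- The distortion constant `ξ = exp (c / (b^γ − 1))`. -/
def xi : ℝ := Real.exp (cc.c / (cc.b ^ cc.γ - 1))

/-- The cookie-cutter set `E = ⋂_{n ≥ 1} ⋃_{σ ∈ Ω_n} J_σ`. -/
def E : Set ℝ := ⋂ (n : ℕ) (_ : 1 ≤ n), ⋃ σ : Fin n → Fin cc.N, cc.Jc (List.ofFn σ)

/-- `η = ξ^{9h}`. -/
def eta (h : ℝ) : ℝ := cc.xi ^ ((9:ℝ) * h)

/-- `L = η³ ξ^{3h}`. -/
def Lconst (h : ℝ) : ℝ := (cc.eta h) ^ 3 * cc.xi ^ ((3:ℝ) * h)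

/-- A Gibbs-like measure for the cookie-cutter system: a Borel probability measure
supported on `E` with `η⁻¹|J_σ|^h ≤ μ(J_σ) ≤ η|J_σ|^h` for every word `σ`. -/
def IsGibbsLike (μ : Measure ℝ) (h : ℝ) : Prop :=
  IsProbabilityMeasure μ ∧ μ (cc.Eᶜ) = 0 ∧
    ∀ σ : List (Fin cc.N), σ ≠ [] →
      (cc.eta h)⁻¹ * cc.diamJ σ ^ h ≤ (μ (cc.Jc σ)).toReal ∧
      (μ (cc.Jc σ)).toReal ≤ cc.eta h * cc.diamJ σ ^ h

/-- A finite maximal antichain in `Ω`. -/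
def IsFMA (Γ : Finset (List (Fin cc.N))) : Prop :=
  (∀ σ ∈ Γ, σ ≠ []) ∧
  (∀ ω : ℕ → Fin cc.N, ∃ k : ℕ, 1 ≤ k ∧ (List.ofFn fun i : Fin k => ω i) ∈ Γ) ∧
  ∀ σ ∈ Γ, ∀ τ ∈ Γ, σ <+: τ → σ = τ

end CookieCutter

/-- The `n`-th quantization error of order `r`. -/
def Vnr (μ : Measure ℝ) (n : ℕ) (r : ℝ) : ℝ :=
  sInf ((fun α : Finset ℝ => ∫ x, Metric.infDist x (α : Set ℝ) ^ r ∂μ) ''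
    {α : Finset ℝ | α.Nonempty ∧ α.card ≤ n})

/-- The auxiliary quantization error `u_{n,r}` with `U = (0,1)`. -/
def unr (μ : Measure ℝ) (n : ℕ) (r : ℝ) : ℝ :=
  sInf ((fun α : Finset ℝ =>
      ∫ x, Metric.infDist x ((α : Set ℝ) ∪ (Set.Ioo (0:ℝ) 1)ᶜ) ^ r ∂μ) ''
    {α : Finset ℝ | α.card ≤ n})

/-! Bounded distortion: the Hölder condition on `f'` and the expansion `|f'| ≥ b` make
`log |φ'_σ|` oscillate on `J` by at most a geometric series summing to `log ξ = c / (b^γ - 1)`.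
Hence `‖φ'_σ‖ ≤ ξ |J_σ|`, `|J_σ| ≤ ‖φ'_σ‖` (mean value theorem) and
`‖φ'_{στ}‖ ≤ ‖φ'_σ‖ ‖φ'_τ‖ ≤ ξ ‖φ'_{στ}‖`. So the partition sums `S_n = ∑_{σ ∈ Ω_n} ‖φ'_σ‖^h`
are submultiplicative, and supermultiplicative up to the factor `ξ^h`; as `(log S_n) / n → Q(h) = 0`,
Fekete's lemma applied to `log S_n` and to `h log ξ - log S_n` gives `1 ≤ S_n ≤ ξ^h`. -/

open Set Real Topology

theorem Subadditive.nonneg_of_tendsto_zero {u : ℕ → ℝ} (hu : Subadditive u)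
    (hlim : Tendsto (fun n => u n / n) atTop (𝓝 0)) {n : ℕ} (hn : n ≠ 0) : 0 ≤ u n := by
  have hbdd := hlim.bddBelow_range
  have h0 : 0 ≤ u n / n :=
    tendsto_nhds_unique hlim (hu.tendsto_lim hbdd) ▸ hu.lim_le_div hbdd hn
  simpa using (le_div_iff₀ (Nat.cast_pos.2 (Nat.pos_of_ne_zero hn))).1 h0

theorem one_le_of_submultiplicative {a : ℕ → ℝ} (ha : ∀ n, 0 < a n)
    (hsub : ∀ m n, a (m + n) ≤ a m * a n)
    (hlim : Tendsto (fun n => log (a n) / n) atTop (𝓝 0)) {n : ℕ} (hn : n ≠ 0) : 1 ≤ a n := by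
  have hu : Subadditive fun n => log (a n) := fun m k => by
    rw [← log_mul (ha m).ne' (ha k).ne']
    exact log_le_log (ha _) (hsub m k)
  exact (log_nonneg_iff (ha n)).1 (hu.nonneg_of_tendsto_zero hlim hn)

theorem le_of_supermultiplicative {a : ℕ → ℝ} {C : ℝ} (ha : ∀ n, 0 < a n)
    (hsup : ∀ m n, a m * a n ≤ C * a (m + n))
    (hlim : Tendsto (fun n => log (a n) / n) atTop (𝓝 0)) {n : ℕ} (hn : n ≠ 0) : a n ≤ C := by
  have hC : 0 < C := by nlinarith [hsup 0 0, ha 0]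
  have hu : Subadditive fun n => log C - log (a n) := fun m k => by
    have := log_le_log (mul_pos (ha m) (ha k)) (hsup m k)
    rw [log_mul (ha m).ne' (ha k).ne', log_mul hC.ne' (ha _).ne'] at this
    linarith
  have hlim' : Tendsto (fun n => (log C - log (a n)) / n) atTop (𝓝 0) := by
    simpa only [sub_div, sub_zero] using (tendsto_const_div_atTop_nhds_zero_nat (log C)).sub hlim
  have := hu.nonneg_of_tendsto_zero hlim' hn
  exact (log_le_log_iff (ha n) hC).1 (by linarith)

theorem log_sub_log_le_abs_sub {x y : ℝ} (hx : 0 < x) (hy : 1 ≤ y) :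
    log x - log y ≤ |x - y| := by
  have hy0 : 0 < y := one_pos.trans_le hy
  calc log x - log y = log (x / y) := (log_div hx.ne' hy0.ne').symm
    _ ≤ x / y - 1 := log_le_sub_one_of_pos (div_pos hx hy0)
    _ = (x - y) / y := by field_simp
    _ ≤ |x - y| / y := by gcongr; exact le_abs_self _
    _ ≤ |x - y| := div_le_self (abs_nonneg _) hy

theorem sum_ofFn_add {α M : Type*} [Fintype α] [AddCommMonoid M] (F : List α → M) (m n : ℕ) :
    ∑ ρ : Fin (m + n) → α, F (List.ofFn ρ)
      = ∑ σ : Fin m → α, ∑ τ : Fin n → α, F (List.ofFn σ ++ List.ofFn τ) := by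
  rw [← Fintype.sum_prod_type']
  exact (Fintype.sum_equiv (Fin.appendEquiv m n) _ _ fun p => by simp [Fin.appendEquiv]).symm

namespace CookieCutter

variable (cc : CookieCutter)

lemma b_pos : 0 < cc.b := one_pos.trans cc.hb1

lemma one_lt_b_rpow_γ : 1 < cc.b ^ cc.γ := one_lt_rpow cc.hb1 cc.hγ.1

lemma b_le_abs_deriv_f {j : Fin cc.N} {x : ℝ} (hx : x ∈ cc.Jsub j) : cc.b ≤ |deriv cc.f x| :=
  cc.hb.1 ⟨x, mem_iUnion.2 ⟨j, hx⟩, rfl⟩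

lemma deriv_f_mul_deriv_φ (j : Fin cc.N) {x : ℝ} (hx : x ∈ Icc 0 1) :
    deriv cc.f (cc.φ j x) * deriv (cc.φ j) x = 1 := by
  have hcomp : HasDerivWithinAt (cc.f ∘ cc.φ j) (deriv cc.f (cc.φ j x) * deriv (cc.φ j) x)
      (Icc 0 1) x :=
    ((cc.hfdiff j _ (cc.hφ_maps j x hx)).hasDerivAt.comp x
      (cc.hφdiff j x hx).hasDerivAt).hasDerivWithinAt
  have hid : HasDerivWithinAt (cc.f ∘ cc.φ j) 1 (Icc 0 1) x :=
    (hasDerivWithinAt_id x _).congr (fun y hy => cc.hφ_rinv j y hy) (cc.hφ_rinv j x hx)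
  exact (uniqueDiffOn_Icc one_pos x hx).eq_deriv _ hcomp hid

lemma deriv_φ_ne_zero (j : Fin cc.N) {x : ℝ} (hx : x ∈ Icc 0 1) : deriv (cc.φ j) x ≠ 0 :=
  right_ne_zero_of_mul_eq_one (cc.deriv_f_mul_deriv_φ j hx)

lemma abs_deriv_φ (j : Fin cc.N) {x : ℝ} (hx : x ∈ Icc 0 1) :
    |deriv (cc.φ j) x| = |deriv cc.f (cc.φ j x)|⁻¹ := by
  rw [eq_inv_of_mul_eq_one_right (cc.deriv_f_mul_deriv_φ j hx), abs_inv]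

lemma abs_deriv_φ_le (j : Fin cc.N) {x : ℝ} (hx : x ∈ Icc 0 1) :
    |deriv (cc.φ j) x| ≤ cc.b⁻¹ := by
  rw [cc.abs_deriv_φ j hx]
  exact inv_anti₀ cc.b_pos (cc.b_le_abs_deriv_f (cc.hφ_maps j x hx))

lemma log_abs_deriv_φ_sub_le (j : Fin cc.N) {u v : ℝ} (hu : u ∈ Icc 0 1) (hv : v ∈ Icc 0 1) :
    log |deriv (cc.φ j) u| - log |deriv (cc.φ j) v| ≤ cc.c * |cc.φ j u - cc.φ j v| ^ cc.γ := by
  have hbu := cc.b_le_abs_deriv_f (cc.hφ_maps j u hu)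
  have hbv := cc.b_le_abs_deriv_f (cc.hφ_maps j v hv)
  rw [cc.abs_deriv_φ j hu, cc.abs_deriv_φ j hv, log_inv, log_inv, neg_sub_neg, abs_sub_comm]
  calc log |deriv cc.f (cc.φ j v)| - log |deriv cc.f (cc.φ j u)|
      ≤ |(|deriv cc.f (cc.φ j v)|) - (|deriv cc.f (cc.φ j u)|)| :=
        log_sub_log_le_abs_sub (cc.b_pos.trans_le hbv) (cc.hb1.le.trans hbu)
    _ ≤ |deriv cc.f (cc.φ j v) - deriv cc.f (cc.φ j u)| := abs_abs_sub_abs_le_abs_sub _ _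
    _ ≤ cc.c * |cc.φ j v - cc.φ j u| ^ cc.γ :=
        cc.hHolder j _ (cc.hφ_maps j v hv) _ (cc.hφ_maps j u hu)

lemma mapsTo_wordMap : ∀ σ : List (Fin cc.N), MapsTo (cc.wordMap σ) (Icc 0 1) (Icc 0 1)
  | [] => mapsTo_id _
  | j :: σ => fun _ hx => cc.hJsub_sub j (cc.hφ_maps j _ (mapsTo_wordMap σ hx))

lemma differentiableAt_wordMap :
    ∀ σ : List (Fin cc.N), ∀ x ∈ Icc (0:ℝ) 1, DifferentiableAt ℝ (cc.wordMap σ) x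
  | [], _, _ => differentiableAt_id
  | j :: σ, x, hx =>
    (cc.hφdiff j _ (cc.mapsTo_wordMap σ hx)).comp x (differentiableAt_wordMap σ x hx)

lemma wordMap_append (σ τ : List (Fin cc.N)) :
    cc.wordMap (σ ++ τ) = cc.wordMap σ ∘ cc.wordMap τ := by
  induction σ with
  | nil => rfl
  | cons j σ ih => exact congrArg (cc.φ j ∘ ·) ih

lemma deriv_wordMap_cons (j : Fin cc.N) (σ : List (Fin cc.N)) {x : ℝ} (hx : x ∈ Icc 0 1) :
    deriv (cc.wordMap (j :: σ)) x = deriv (cc.φ j) (cc.wordMap σ x) * deriv (cc.wordMap σ) x :=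
  deriv_comp x (cc.hφdiff j _ (cc.mapsTo_wordMap σ hx)) (cc.differentiableAt_wordMap σ x hx)

lemma deriv_wordMap_append (σ τ : List (Fin cc.N)) {x : ℝ} (hx : x ∈ Icc 0 1) :
    deriv (cc.wordMap (σ ++ τ)) x
      = deriv (cc.wordMap σ) (cc.wordMap τ x) * deriv (cc.wordMap τ) x := by
  rw [wordMap_append]
  exact deriv_comp x (cc.differentiableAt_wordMap σ _ (cc.mapsTo_wordMap τ hx))
    (cc.differentiableAt_wordMap τ x hx)

lemma deriv_wordMap_ne_zero :
    ∀ σ : List (Fin cc.N), ∀ x ∈ Icc (0:ℝ) 1, deriv (cc.wordMap σ) x ≠ 0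
  | [], _, _ => by simp [wordMap]
  | j :: σ, x, hx => by
    rw [cc.deriv_wordMap_cons j σ hx]
    exact mul_ne_zero (cc.deriv_φ_ne_zero j (cc.mapsTo_wordMap σ hx))
      (deriv_wordMap_ne_zero σ x hx)

lemma abs_deriv_wordMap_le :
    ∀ σ : List (Fin cc.N), ∀ x ∈ Icc (0:ℝ) 1, |deriv (cc.wordMap σ) x| ≤ cc.b⁻¹ ^ σ.length
  | [], _, _ => by simp [wordMap]
  | j :: σ, x, hx => by
    rw [cc.deriv_wordMap_cons j σ hx, abs_mul, List.length_cons, pow_succ']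
    exact mul_le_mul (cc.abs_deriv_φ_le j (cc.mapsTo_wordMap σ hx))
      (abs_deriv_wordMap_le σ x hx) (abs_nonneg _) (inv_nonneg.2 cc.b_pos.le)

lemma abs_wordMap_sub_le (σ : List (Fin cc.N)) {C : ℝ}
    (hC : ∀ x ∈ Icc (0:ℝ) 1, |deriv (cc.wordMap σ) x| ≤ C) {x y : ℝ}
    (hx : x ∈ Icc 0 1) (hy : y ∈ Icc 0 1) : |cc.wordMap σ x - cc.wordMap σ y| ≤ C := by
  have hlip := (convex_Icc (0:ℝ) 1).norm_image_sub_le_of_norm_deriv_le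
    (cc.differentiableAt_wordMap σ) hC hy hx
  have hxy : |x - y| ≤ 1 := abs_sub_le_iff.2 ⟨by linarith [hx.2, hy.1], by linarith [hx.1, hy.2]⟩
  calc |cc.wordMap σ x - cc.wordMap σ y| ≤ C * |x - y| := hlip
    _ ≤ C := mul_le_of_le_one_right ((abs_nonneg _).trans (hC x hx)) hxy

/-- The invariant `C (1 - r^n)` with `C = c / (b^γ - 1)`, `r = b^{-γ}` is the partial sum
`c (r + ⋯ + r^n)`: the `k`-th letter of `σ` contributes `c |J_{σ_k ⋯ σ_n}|^γ ≤ c r^{n-k+1}`. -/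
lemma log_abs_deriv_wordMap_sub_le : ∀ σ : List (Fin cc.N), ∀ x ∈ Icc (0:ℝ) 1, ∀ y ∈ Icc (0:ℝ) 1,
    log |deriv (cc.wordMap σ) x| - log |deriv (cc.wordMap σ) y|
      ≤ cc.c / (cc.b ^ cc.γ - 1) * (1 - (cc.b ^ cc.γ)⁻¹ ^ σ.length)
  | [], _, _, _, _ => by simp [wordMap]
  | j :: τ, x, hx, y, hy => by
    have hx' := cc.mapsTo_wordMap τ hx
    have hy' := cc.mapsTo_wordMap τ hy
    have hdist : |cc.φ j (cc.wordMap τ x) - cc.φ j (cc.wordMap τ y)| ^ cc.γ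
        ≤ (cc.b ^ cc.γ)⁻¹ ^ (τ.length + 1) := by
      calc |cc.φ j (cc.wordMap τ x) - cc.φ j (cc.wordMap τ y)| ^ cc.γ
          ≤ (cc.b⁻¹ ^ (τ.length + 1)) ^ cc.γ :=
            rpow_le_rpow (abs_nonneg _)
              (cc.abs_wordMap_sub_le (j :: τ) (cc.abs_deriv_wordMap_le (j :: τ)) hx hy) cc.hγ.1.le
        _ = (cc.b ^ cc.γ)⁻¹ ^ (τ.length + 1) := by
            rw [← rpow_pow_comm (inv_nonneg.2 cc.b_pos.le), inv_rpow cc.b_pos.le]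
    have hgeom : cc.c / (cc.b ^ cc.γ - 1) * (1 - (cc.b ^ cc.γ)⁻¹ ^ τ.length)
          + cc.c * (cc.b ^ cc.γ)⁻¹ ^ (τ.length + 1)
        = cc.c / (cc.b ^ cc.γ - 1) * (1 - (cc.b ^ cc.γ)⁻¹ ^ (τ.length + 1)) := by
      have := cc.one_lt_b_rpow_γ
      have : cc.b ^ cc.γ - 1 ≠ 0 := by linarith
      have : cc.b ^ cc.γ ≠ 0 := by positivity
      rw [pow_succ]
      field_simp
      ring
    rw [cc.deriv_wordMap_cons j τ hx, cc.deriv_wordMap_cons j τ hy, abs_mul, abs_mul,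
      log_mul (abs_ne_zero.2 (cc.deriv_φ_ne_zero j hx'))
        (abs_ne_zero.2 (cc.deriv_wordMap_ne_zero τ x hx)),
      log_mul (abs_ne_zero.2 (cc.deriv_φ_ne_zero j hy'))
        (abs_ne_zero.2 (cc.deriv_wordMap_ne_zero τ y hy)),
      List.length_cons, ← hgeom]
    have := cc.log_abs_deriv_φ_sub_le j hx' hy'
    have := mul_le_mul_of_nonneg_left hdist cc.hc.le
    have := log_abs_deriv_wordMap_sub_le τ x hx y hy
    linarith

lemma log_xi : log cc.xi = cc.c / (cc.b ^ cc.γ - 1) := log_exp _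

lemma xi_pos : 0 < cc.xi := exp_pos _

lemma one_le_xi : 1 ≤ cc.xi :=
  one_le_exp (div_pos cc.hc (sub_pos.2 cc.one_lt_b_rpow_γ)).le

lemma abs_deriv_wordMap_le_xi_mul (σ : List (Fin cc.N)) {x y : ℝ} (hx : x ∈ Icc 0 1)
    (hy : y ∈ Icc 0 1) : |deriv (cc.wordMap σ) x| ≤ cc.xi * |deriv (cc.wordMap σ) y| := by
  have hpos : ∀ z ∈ Icc (0:ℝ) 1, 0 < |deriv (cc.wordMap σ) z| := fun z hz =>
    abs_pos.2 (cc.deriv_wordMap_ne_zero σ z hz)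
  rw [← log_le_log_iff (hpos x hx) (mul_pos cc.xi_pos (hpos y hy)),
    log_mul cc.xi_pos.ne' (hpos y hy).ne', log_xi]
  have := cc.log_abs_deriv_wordMap_sub_le σ x hx y hy
  have := mul_nonneg (div_pos cc.hc (sub_pos.2 cc.one_lt_b_rpow_γ)).le
    (pow_nonneg (inv_nonneg.2 (one_pos.trans cc.one_lt_b_rpow_γ).le) σ.length)
  linarith

lemma abs_deriv_wordMap_le_φnorm (σ : List (Fin cc.N)) {x : ℝ} (hx : x ∈ Icc 0 1) :
    |deriv (cc.wordMap σ) x| ≤ cc.φnorm σ :=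
  le_csSup ⟨_, forall_mem_image.2 (cc.abs_deriv_wordMap_le σ)⟩ (mem_image_of_mem _ hx)

lemma φnorm_le (σ : List (Fin cc.N)) {M : ℝ}
    (hM : ∀ x ∈ Icc (0:ℝ) 1, |deriv (cc.wordMap σ) x| ≤ M) : cc.φnorm σ ≤ M :=
  csSup_le ((nonempty_Icc.2 zero_le_one).image _) (forall_mem_image.2 hM)

lemma φnorm_pos (σ : List (Fin cc.N)) : 0 < cc.φnorm σ :=
  (abs_pos.2 (cc.deriv_wordMap_ne_zero σ 0 (left_mem_Icc.2 zero_le_one))).trans_le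
    (cc.abs_deriv_wordMap_le_φnorm σ (left_mem_Icc.2 zero_le_one))

lemma φnorm_le_xi_mul (σ : List (Fin cc.N)) {y : ℝ} (hy : y ∈ Icc 0 1) :
    cc.φnorm σ ≤ cc.xi * |deriv (cc.wordMap σ) y| :=
  cc.φnorm_le σ fun _ hx => cc.abs_deriv_wordMap_le_xi_mul σ hx hy

lemma diamJ_nonneg (σ : List (Fin cc.N)) : 0 ≤ cc.diamJ σ := diam_nonneg

lemma diamJ_le_φnorm (σ : List (Fin cc.N)) : cc.diamJ σ ≤ cc.φnorm σ := by
  refine diam_le_of_forall_dist_le (cc.φnorm_pos σ).le ?_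
  rintro _ ⟨x, hx, rfl⟩ _ ⟨y, hy, rfl⟩
  rw [Real.dist_eq]
  exact cc.abs_wordMap_sub_le σ (fun _ hz => cc.abs_deriv_wordMap_le_φnorm σ hz) hx hy

lemma φnorm_le_xi_mul_diamJ (σ : List (Fin cc.N)) : cc.φnorm σ ≤ cc.xi * cc.diamJ σ := by
  obtain ⟨z, hz, hslope⟩ := exists_deriv_eq_slope (cc.wordMap σ) zero_lt_one
    (fun x hx => (cc.differentiableAt_wordMap σ x hx).continuousAt.continuousWithinAt)
    (fun x hx => (cc.differentiableAt_wordMap σ x (Ioo_subset_Icc_self hx)).differentiableWithinAt)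
  have hbdd : Bornology.IsBounded (cc.Jc σ) :=
    isBounded_Icc (0:ℝ) 1 |>.subset (cc.mapsTo_wordMap σ).image_subset
  calc cc.φnorm σ ≤ cc.xi * |deriv (cc.wordMap σ) z| := cc.φnorm_le_xi_mul σ (Ioo_subset_Icc_self hz)
    _ ≤ cc.xi * cc.diamJ σ := by
      gcongr
      · exact cc.xi_pos.le
      rw [hslope, sub_zero, div_one, ← Real.dist_eq]
      exact dist_le_diam_of_mem hbdd (mem_image_of_mem _ (right_mem_Icc.2 zero_le_one))
        (mem_image_of_mem _ (left_mem_Icc.2 zero_le_one))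

lemma φnorm_append_le (σ τ : List (Fin cc.N)) :
    cc.φnorm (σ ++ τ) ≤ cc.φnorm σ * cc.φnorm τ :=
  cc.φnorm_le _ fun x hx => by
    rw [cc.deriv_wordMap_append σ τ hx, abs_mul]
    exact mul_le_mul (cc.abs_deriv_wordMap_le_φnorm σ (cc.mapsTo_wordMap τ hx))
      (cc.abs_deriv_wordMap_le_φnorm τ hx) (abs_nonneg _) (cc.φnorm_pos σ).le

lemma φnorm_mul_φnorm_le (σ τ : List (Fin cc.N)) :
    cc.φnorm σ * cc.φnorm τ ≤ cc.xi * cc.φnorm (σ ++ τ) := by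
  have hσ := cc.φnorm_pos σ
  rw [mul_comm (cc.φnorm σ), ← le_div_iff₀ hσ]
  refine cc.φnorm_le τ fun x hx => ?_
  rw [le_div_iff₀ hσ]
  calc |deriv (cc.wordMap τ) x| * cc.φnorm σ
      ≤ |deriv (cc.wordMap τ) x| * (cc.xi * |deriv (cc.wordMap σ) (cc.wordMap τ x)|) := by
        gcongr
        exact cc.φnorm_le_xi_mul σ (cc.mapsTo_wordMap τ hx)
    _ = cc.xi * |deriv (cc.wordMap (σ ++ τ)) x| := by
        rw [cc.deriv_wordMap_append σ τ hx, abs_mul]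
        ring
    _ ≤ cc.xi * cc.φnorm (σ ++ τ) := by
        gcongr
        · exact cc.xi_pos.le
        exact cc.abs_deriv_wordMap_le_φnorm _ hx

def partitionSum (h : ℝ) (k : ℕ) : ℝ := ∑ σ : Fin k → Fin cc.N, cc.φnorm (List.ofFn σ) ^ h

lemma partitionSum_pos (h : ℝ) (k : ℕ) : 0 < cc.partitionSum h k := by
  have : Nonempty (Fin cc.N) := ⟨⟨0, by linarith [cc.hN]⟩⟩
  exact Finset.sum_pos (fun _ _ => rpow_pos_of_pos (cc.φnorm_pos _) h) Finset.univ_nonempty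

lemma partitionSum_add_le {h : ℝ} (hh : 0 ≤ h) (m n : ℕ) :
    cc.partitionSum h (m + n) ≤ cc.partitionSum h m * cc.partitionSum h n := by
  simp only [partitionSum]
  rw [sum_ofFn_add fun σ => cc.φnorm σ ^ h, Finset.sum_mul_sum]
  refine Finset.sum_le_sum fun σ _ => Finset.sum_le_sum fun τ _ => ?_
  rw [← mul_rpow (cc.φnorm_pos _).le (cc.φnorm_pos _).le]
  exact rpow_le_rpow (cc.φnorm_pos _).le (cc.φnorm_append_le _ _) hh

lemma partitionSum_mul_le {h : ℝ} (hh : 0 ≤ h) (m n : ℕ) :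
    cc.partitionSum h m * cc.partitionSum h n ≤ cc.xi ^ h * cc.partitionSum h (m + n) := by
  simp only [partitionSum]
  rw [sum_ofFn_add fun σ => cc.φnorm σ ^ h, Finset.sum_mul_sum]
  simp only [Finset.mul_sum]
  refine Finset.sum_le_sum fun σ _ => Finset.sum_le_sum fun τ _ => ?_
  rw [← mul_rpow (cc.φnorm_pos _).le (cc.φnorm_pos _).le,
    ← mul_rpow cc.xi_pos.le (cc.φnorm_pos _).le]
  exact rpow_le_rpow (mul_pos (cc.φnorm_pos _) (cc.φnorm_pos _)).le
    (cc.φnorm_mul_φnorm_le _ _) hh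

lemma sum_diamJ_rpow_le_partitionSum {h : ℝ} (hh : 0 ≤ h) (n : ℕ) :
    ∑ σ : Fin n → Fin cc.N, cc.diamJ (List.ofFn σ) ^ h ≤ cc.partitionSum h n :=
  Finset.sum_le_sum fun _ _ => rpow_le_rpow (cc.diamJ_nonneg _) (cc.diamJ_le_φnorm _) hh

lemma partitionSum_le_xi_rpow_mul_sum_diamJ_rpow {h : ℝ} (hh : 0 ≤ h) (n : ℕ) :
    cc.partitionSum h n ≤ cc.xi ^ h * ∑ σ : Fin n → Fin cc.N, cc.diamJ (List.ofFn σ) ^ h := by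
  rw [partitionSum, Finset.mul_sum]
  refine Finset.sum_le_sum fun σ _ => ?_
  rw [← mul_rpow cc.xi_pos.le (cc.diamJ_nonneg _)]
  exact rpow_le_rpow (cc.φnorm_pos _).le (cc.φnorm_le_xi_mul_diamJ _) hh

end CookieCutter

theorem sum_diam_h_bounds (cc : CookieCutter) (Q : ℝ → ℝ)
    (hQ : ∀ t : ℝ, Filter.Tendsto
      (fun k : ℕ => (1 / (k : ℝ)) * Real.log
        (∑ σ : Fin k → Fin cc.N, cc.φnorm (List.ofFn σ) ^ t))
      Filter.atTop (nhds (Q t)))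
    (h : ℝ) (hh0 : 0 < h) (hQh : Q h = 0) :
    ∀ n : ℕ, 1 ≤ n →
      cc.xi ^ (-(3 * h)) ≤ ∑ σ : Fin n → Fin cc.N, cc.diamJ (List.ofFn σ) ^ h ∧
      ∑ σ : Fin n → Fin cc.N, cc.diamJ (List.ofFn σ) ^ h ≤ cc.xi ^ (3 * h) := by
  intro n hn
  have hlim : Tendsto (fun k : ℕ => log (cc.partitionSum h k) / k) atTop (𝓝 0) := by
    simpa only [hQh, one_div_mul_eq_div, CookieCutter.partitionSum] using hQ h
  have hS₁ : 1 ≤ cc.partitionSum h n := one_le_of_submultiplicative (cc.partitionSum_pos h)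
    (cc.partitionSum_add_le hh0.le) hlim (by omega)
  have hS₂ : cc.partitionSum h n ≤ cc.xi ^ h := le_of_supermultiplicative (cc.partitionSum_pos h)
    (cc.partitionSum_mul_le hh0.le) hlim (by omega)
  have hξ := cc.one_le_xi
  constructor
  · calc cc.xi ^ (-(3 * h)) ≤ cc.xi ^ (-h) := rpow_le_rpow_of_exponent_le hξ (by linarith)
      _ = (cc.xi ^ h)⁻¹ := rpow_neg (by linarith) h
      _ ≤ ∑ σ : Fin n → Fin cc.N, cc.diamJ (List.ofFn σ) ^ h := by
        rw [inv_le_iff_one_le_mul₀' (by positivity)]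
        exact hS₁.trans (cc.partitionSum_le_xi_rpow_mul_sum_diamJ_rpow hh0.le n)
  · calc ∑ σ : Fin n → Fin cc.N, cc.diamJ (List.ofFn σ) ^ h ≤ cc.partitionSum h n :=
          cc.sum_diamJ_rpow_le_partitionSum hh0.le n
      _ ≤ cc.xi ^ h := hS₂
      _ ≤ cc.xi ^ (3 * h) := rpow_le_rpow_of_exponent_le hξ (by linarith)
end
end

section
/- With L := η^3 ξ^{3h}, one has L > 1 and for all words σ, τ ∈ Ω: L^{-1} μ_h(J_σ) μ_h(J_τ) ≤ μ_h(J_{στ}) ≤ L μ_h(J_σ) μ_h(J_τ). -/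
open MeasureTheory Filter Metric

noncomputable section

namespace CCAux

open Real Set

variable (cc : CookieCutter)

/-- The derivative of `wordMap σ`, computed by the chain rule. -/
def Dw : List (Fin cc.N) → ℝ → ℝ
  | [] => fun _ => 1
  | j :: ρ => fun u => deriv (cc.φ j) (cc.wordMap ρ u) * Dw ρ u

lemma wm_mem : ∀ (σ : List (Fin cc.N)), ∀ u ∈ Icc (0:ℝ) 1, cc.wordMap σ u ∈ Icc (0:ℝ) 1
  | [], _, hu => hu
  | j :: ρ, u, hu => cc.hJsub_sub j (cc.hφ_maps j _ (wm_mem ρ u hu))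

lemma b_pos : 0 < cc.b := lt_trans one_pos cc.hb1

lemma fderiv_lb {j : Fin cc.N} {x : ℝ} (hx : x ∈ cc.Jsub j) : cc.b ≤ |deriv cc.f x| :=
  cc.hb.1 ⟨x, Set.mem_iUnion.mpr ⟨j, hx⟩, rfl⟩

lemma inv_rel (j : Fin cc.N) {u : ℝ} (hu : u ∈ Icc (0:ℝ) 1) :
    deriv cc.f (cc.φ j u) * deriv (cc.φ j) u = 1 := by
  have hφu := cc.hφ_maps j u hu
  have hg : HasDerivAt (cc.f ∘ cc.φ j) (deriv cc.f (cc.φ j u) * deriv (cc.φ j) u) u :=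
    ((cc.hfdiff j _ hφu).hasDerivAt).comp u ((cc.hφdiff j u hu).hasDerivAt)
  have h1 : HasDerivWithinAt id (deriv cc.f (cc.φ j u) * deriv (cc.φ j) u) (Icc (0:ℝ) 1) u :=
    hg.hasDerivWithinAt.congr (fun y hy => (cc.hφ_rinv j y hy).symm) (cc.hφ_rinv j u hu).symm
  have h2 : HasDerivWithinAt id 1 (Icc (0:ℝ) 1) u := (hasDerivAt_id u).hasDerivWithinAt
  exact ((uniqueDiffOn_Icc one_pos) u hu).eq_deriv _ h1 h2

lemma phi_deriv_abs (j : Fin cc.N) {u : ℝ} (hu : u ∈ Icc (0:ℝ) 1) :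
    |deriv (cc.φ j) u| = |deriv cc.f (cc.φ j u)|⁻¹ := by
  have h := inv_rel cc j hu
  have h1 : |deriv (cc.φ j) u| * |deriv cc.f (cc.φ j u)| = 1 := by
    rw [← abs_mul, mul_comm, h, abs_one]
  exact eq_inv_of_mul_eq_one_left h1

lemma fphi_pos (j : Fin cc.N) {u : ℝ} (hu : u ∈ Icc (0:ℝ) 1) :
    cc.b ≤ |deriv cc.f (cc.φ j u)| := fderiv_lb cc (cc.hφ_maps j u hu)

lemma phi_deriv_pos (j : Fin cc.N) {u : ℝ} (hu : u ∈ Icc (0:ℝ) 1) :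
    0 < |deriv (cc.φ j) u| := by
  rw [phi_deriv_abs cc j hu]
  exact inv_pos.mpr (lt_of_lt_of_le (b_pos cc) (fphi_pos cc j hu))

lemma phi_deriv_le (j : Fin cc.N) {u : ℝ} (hu : u ∈ Icc (0:ℝ) 1) :
    |deriv (cc.φ j) u| ≤ 1 / cc.b := by
  rw [phi_deriv_abs cc j hu, one_div]
  exact inv_anti₀ (b_pos cc) (fphi_pos cc j hu)

lemma wm_hasDeriv : ∀ (σ : List (Fin cc.N)), ∀ u ∈ Icc (0:ℝ) 1,
    HasDerivAt (cc.wordMap σ) (Dw cc σ u) u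
  | [], u, _ => hasDerivAt_id u
  | j :: ρ, u, hu =>
    ((cc.hφdiff j _ (wm_mem cc ρ u hu)).hasDerivAt).comp u (wm_hasDeriv ρ u hu)

lemma Dw_pos : ∀ (σ : List (Fin cc.N)), ∀ u ∈ Icc (0:ℝ) 1, 0 < |Dw cc σ u|
  | [], u, _ => by simp [Dw]
  | j :: ρ, u, hu => by
    rw [show Dw cc (j :: ρ) u = deriv (cc.φ j) (cc.wordMap ρ u) * Dw cc ρ u from rfl, abs_mul]
    exact mul_pos (phi_deriv_pos cc j (wm_mem cc ρ u hu)) (Dw_pos ρ u hu)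

lemma mvt {g g' : ℝ → ℝ} (hg : ∀ u ∈ Icc (0:ℝ) 1, HasDerivAt g (g' u) u)
    {x y : ℝ} (hx : x ∈ Icc (0:ℝ) 1) (hy : y ∈ Icc (0:ℝ) 1) :
    ∃ z ∈ Icc (0:ℝ) 1, g y - g x = g' z * (y - x) := by
  rcases lt_trichotomy x y with hlt | heq | hgt
  · have hsub : Icc x y ⊆ Icc (0:ℝ) 1 := Icc_subset_Icc hx.1 hy.2
    obtain ⟨z, hz, hz'⟩ := exists_hasDerivAt_eq_slope g g' hlt
      (fun u hu => (hg u (hsub hu)).continuousAt.continuousWithinAt)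
      (fun u hu => hg u (hsub (Ioo_subset_Icc_self hu)))
    refine ⟨z, hsub (Ioo_subset_Icc_self hz), ?_⟩
    rw [hz', div_mul_cancel₀ _ (sub_ne_zero.mpr hlt.ne')]
  · exact ⟨x, hx, by rw [heq]; ring⟩
  · have hsub : Icc y x ⊆ Icc (0:ℝ) 1 := Icc_subset_Icc hy.1 hx.2
    obtain ⟨z, hz, hz'⟩ := exists_hasDerivAt_eq_slope g g' hgt
      (fun u hu => (hg u (hsub hu)).continuousAt.continuousWithinAt)
      (fun u hu => hg u (hsub (Ioo_subset_Icc_self hu)))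
    refine ⟨z, hsub (Ioo_subset_Icc_self hz), ?_⟩
    have hne : x - y ≠ 0 := sub_ne_zero.mpr (ne_of_gt hgt)
    have h1 : g' z * (x - y) = g x - g y := by
      rw [hz', div_mul_cancel₀ _ hne]
    have h2 : g' z * (y - x) = -(g' z * (x - y)) := by ring
    linarith

lemma contract : ∀ (σ : List (Fin cc.N)), ∀ x ∈ Icc (0:ℝ) 1, ∀ y ∈ Icc (0:ℝ) 1,
    |cc.wordMap σ y - cc.wordMap σ x| ≤ (1 / cc.b) ^ σ.length * |y - x|
  | [], x, _, y, _ => by simp [CookieCutter.wordMap]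
  | j :: ρ, x, hx, y, hy => by
    have hwx := wm_mem cc ρ x hx
    have hwy := wm_mem cc ρ y hy
    obtain ⟨z, hz, hzeq⟩ := mvt
      (fun u hu => ((cc.hφdiff j u hu).hasDerivAt : HasDerivAt (cc.φ j) (deriv (cc.φ j) u) u))
      hwx hwy
    have h1 : |cc.wordMap (j :: ρ) y - cc.wordMap (j :: ρ) x|
        = |deriv (cc.φ j) z| * |cc.wordMap ρ y - cc.wordMap ρ x| := by
      show |cc.φ j (cc.wordMap ρ y) - cc.φ j (cc.wordMap ρ x)| = _
      rw [hzeq, abs_mul]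
    rw [h1]
    have h2 := contract ρ x hx y hy
    have hbp := b_pos cc
    have hb0 : (0:ℝ) < 1 / cc.b := by positivity
    calc |deriv (cc.φ j) z| * |cc.wordMap ρ y - cc.wordMap ρ x|
        ≤ (1 / cc.b) * ((1 / cc.b) ^ ρ.length * |y - x|) := by
          apply mul_le_mul (phi_deriv_le cc j hz) h2 (abs_nonneg _) hb0.le
      _ = (1 / cc.b) ^ (j :: ρ).length * |y - x| := by
          rw [List.length_cons, pow_succ]; ring

lemma log_ratio {p q bb : ℝ} (hb : 0 < bb) (hp : bb ≤ p) (hq : bb ≤ q) :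
    Real.log p - Real.log q ≤ |p - q| / bb := by
  have hp0 : 0 < p := lt_of_lt_of_le hb hp
  have hq0 : 0 < q := lt_of_lt_of_le hb hq
  have h1 : Real.log p - Real.log q = Real.log (p / q) := (Real.log_div hp0.ne' hq0.ne').symm
  have h2 : Real.log (p / q) ≤ p / q - 1 := Real.log_le_sub_one_of_pos (by positivity)
  have h3 : p / q - 1 = (p - q) / q := by field_simp
  have h4 : (p - q) / q ≤ |p - q| / bb := by
    rw [div_le_div_iff₀ hq0 hb]
    have := le_abs_self (p - q)
    have hab := abs_nonneg (p - q)
    nlinarith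
  linarith

lemma bgam_gt : 1 < cc.b ^ cc.γ :=
  (Real.one_lt_rpow_iff_of_pos (b_pos cc)).mpr (Or.inl ⟨cc.hb1, cc.hγ.1⟩)

lemma natpow_rpow {x : ℝ} (hx : 0 ≤ x) (n : ℕ) (γ : ℝ) :
    ((x ^ n : ℝ)) ^ γ = (x ^ γ) ^ n := by
  rw [← Real.rpow_natCast x n, ← Real.rpow_mul hx, mul_comm, Real.rpow_mul hx,
    Real.rpow_natCast]

lemma a_pos : 0 < (1 / cc.b) ^ cc.γ := by
  have hb := b_pos cc
  exact Real.rpow_pos_of_pos (by positivity) _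

lemma bga : cc.b ^ cc.γ * (1 / cc.b) ^ cc.γ = 1 := by
  have hb := b_pos cc
  rw [← Real.mul_rpow hb.le (by positivity)]
  rw [mul_one_div_cancel (b_pos cc).ne']
  exact Real.one_rpow _

lemma log_dist : ∀ (σ : List (Fin cc.N)), ∀ x ∈ Icc (0:ℝ) 1, ∀ y ∈ Icc (0:ℝ) 1,
    Real.log |Dw cc σ x| - Real.log |Dw cc σ y|
      ≤ (cc.c / (cc.b ^ cc.γ - 1)) * (1 - ((1 / cc.b) ^ cc.γ) ^ σ.length)
  | [], x, _, y, _ => by simp [Dw]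
  | j :: ρ, x, hx, y, hy => by
    set a : ℝ := (1 / cc.b) ^ cc.γ with ha_def
    set C : ℝ := cc.c / (cc.b ^ cc.γ - 1) with hC_def
    have hbg := bgam_gt cc
    have ha0 := a_pos cc
    have hwx := wm_mem cc ρ x hx
    have hwy := wm_mem cc ρ y hy
    have hfx : cc.b ≤ |deriv cc.f (cc.φ j (cc.wordMap ρ x))| := fphi_pos cc j hwx
    have hfy : cc.b ≤ |deriv cc.f (cc.φ j (cc.wordMap ρ y))| := fphi_pos cc j hwy
    have hb0 := b_pos cc
    -- split the logs
    have hsplit : ∀ u, u ∈ Icc (0:ℝ) 1 →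
        Real.log |Dw cc (j :: ρ) u|
          = Real.log |deriv (cc.φ j) (cc.wordMap ρ u)| + Real.log |Dw cc ρ u| := by
      intro u hu
      rw [show Dw cc (j :: ρ) u = deriv (cc.φ j) (cc.wordMap ρ u) * Dw cc ρ u from rfl,
        abs_mul, Real.log_mul (phi_deriv_pos cc j (wm_mem cc ρ u hu)).ne' (Dw_pos cc ρ u hu).ne']
    rw [hsplit x hx, hsplit y hy]
    -- the bracket term
    have hbr : Real.log |deriv (cc.φ j) (cc.wordMap ρ x)|
        - Real.log |deriv (cc.φ j) (cc.wordMap ρ y)| ≤ cc.c * a ^ (ρ.length + 1) := by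
      rw [phi_deriv_abs cc j hwx, phi_deriv_abs cc j hwy, Real.log_inv, Real.log_inv]
      set P : ℝ := deriv cc.f (cc.φ j (cc.wordMap ρ y)) with hP
      set Q : ℝ := deriv cc.f (cc.φ j (cc.wordMap ρ x)) with hQ
      have h1 : Real.log |P| - Real.log |Q| ≤ |(|P|) - (|Q|)| / cc.b := log_ratio hb0 hfy hfx
      have h1' : |(|P|) - (|Q|)| / cc.b ≤ |(|P|) - (|Q|)| := div_le_self (abs_nonneg _) cc.hb1.le
      have h2 : |(|P|) - (|Q|)| ≤ |P - Q| := abs_abs_sub_abs_le_abs_sub _ _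
      have h3 : |P - Q| ≤ cc.c * |cc.φ j (cc.wordMap ρ y) - cc.φ j (cc.wordMap ρ x)| ^ cc.γ :=
        cc.hHolder j _ (cc.hφ_maps j _ hwy) _ (cc.hφ_maps j _ hwx)
      have hxy1 : |y - x| ≤ 1 := by
        rw [abs_le]
        constructor <;> [linarith [hx.2, hy.1]; linarith [hx.1, hy.2]]
      have hb1b : (0:ℝ) ≤ 1 / cc.b := by positivity
      have h4 : |cc.φ j (cc.wordMap ρ y) - cc.φ j (cc.wordMap ρ x)| ≤ (1 / cc.b) ^ (ρ.length + 1) := by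
        have hcon := contract cc (j :: ρ) x hx y hy
        have hle : (1 / cc.b) ^ (j :: ρ).length * |y - x| ≤ (1 / cc.b) ^ (ρ.length + 1) * 1 := by
          rw [List.length_cons]
          apply mul_le_mul_of_nonneg_left hxy1 (by positivity)
        calc |cc.φ j (cc.wordMap ρ y) - cc.φ j (cc.wordMap ρ x)|
            = |cc.wordMap (j :: ρ) y - cc.wordMap (j :: ρ) x| := rfl
          _ ≤ (1 / cc.b) ^ (j :: ρ).length * |y - x| := hcon
          _ ≤ (1 / cc.b) ^ (ρ.length + 1) := by rw [List.length_cons] at hle ⊢; linarith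
      have h5 : |cc.φ j (cc.wordMap ρ y) - cc.φ j (cc.wordMap ρ x)| ^ cc.γ ≤ a ^ (ρ.length + 1) := by
        rw [ha_def, ← natpow_rpow hb1b]
        exact Real.rpow_le_rpow (abs_nonneg _) h4 cc.hγ.1.le
      have h6 : |P - Q| ≤ cc.c * a ^ (ρ.length + 1) :=
        le_trans h3 (mul_le_mul_of_nonneg_left h5 cc.hc.le)
      linarith
    have hih := log_dist ρ x hx y hy
    have hCa : C * (1 - a) = cc.c * a := by
      have hne : cc.b ^ cc.γ - 1 ≠ 0 := by linarith
      have h1a : 1 - a = a * (cc.b ^ cc.γ - 1) := by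
        have := bga cc
        rw [ha_def] at *
        nlinarith [this]
      rw [hC_def, h1a]
      field_simp
    have hkey : cc.c * a ^ (ρ.length + 1) = C * (1 - a) * a ^ ρ.length := by
      rw [hCa, pow_succ]; ring
    have hfin : C * (1 - a) * a ^ ρ.length + C * (1 - a ^ ρ.length)
        = C * (1 - a ^ (ρ.length + 1)) := by ring
    rw [List.length_cons]
    calc Real.log |deriv (cc.φ j) (cc.wordMap ρ x)| + Real.log |Dw cc ρ x|
        - (Real.log |deriv (cc.φ j) (cc.wordMap ρ y)| + Real.log |Dw cc ρ y|)
        = (Real.log |deriv (cc.φ j) (cc.wordMap ρ x)| - Real.log |deriv (cc.φ j) (cc.wordMap ρ y)|)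
          + (Real.log |Dw cc ρ x| - Real.log |Dw cc ρ y|) := by ring
      _ ≤ cc.c * a ^ (ρ.length + 1) + C * (1 - a ^ ρ.length) := add_le_add hbr hih
      _ = C * (1 - a ^ (ρ.length + 1)) := by rw [hkey]; exact hfin

lemma C_nonneg : 0 ≤ cc.c / (cc.b ^ cc.γ - 1) :=
  div_nonneg cc.hc.le (by linarith [bgam_gt cc])

lemma xi_pos : 0 < cc.xi := Real.exp_pos _

lemma xi_gt_one : 1 < cc.xi := by
  have h1 : 0 < cc.c / (cc.b ^ cc.γ - 1) :=
    div_pos cc.hc (by linarith [bgam_gt cc])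
  calc (1:ℝ) = Real.exp 0 := Real.exp_zero.symm
    _ < Real.exp (cc.c / (cc.b ^ cc.γ - 1)) := Real.exp_lt_exp.mpr h1

lemma Dw_ratio (σ : List (Fin cc.N)) {x y : ℝ} (hx : x ∈ Icc (0:ℝ) 1) (hy : y ∈ Icc (0:ℝ) 1) :
    |Dw cc σ x| ≤ cc.xi * |Dw cc σ y| := by
  set C : ℝ := cc.c / (cc.b ^ cc.γ - 1) with hC_def
  have h := log_dist cc σ x hx y hy
  have hC0 := C_nonneg cc
  have ha0 := a_pos cc
  have h2 : Real.log |Dw cc σ x| ≤ Real.log |Dw cc σ y| + C := by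
    have hpow : (0:ℝ) ≤ ((1 / cc.b) ^ cc.γ) ^ σ.length := pow_nonneg ha0.le _
    nlinarith
  calc |Dw cc σ x| = Real.exp (Real.log |Dw cc σ x|) := (Real.exp_log (Dw_pos cc σ x hx)).symm
    _ ≤ Real.exp (Real.log |Dw cc σ y| + C) := Real.exp_le_exp.mpr h2
    _ = |Dw cc σ y| * cc.xi := by
        rw [Real.exp_add, Real.exp_log (Dw_pos cc σ y hy)]; rfl
    _ = cc.xi * |Dw cc σ y| := mul_comm _ _

lemma zero_mem : (0:ℝ) ∈ Icc (0:ℝ) 1 := ⟨le_refl 0, zero_le_one⟩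
lemma one_mem : (1:ℝ) ∈ Icc (0:ℝ) 1 := ⟨zero_le_one, le_refl 1⟩

lemma diam_le (σ : List (Fin cc.N)) {u : ℝ} (hu : u ∈ Icc (0:ℝ) 1) :
    cc.diamJ σ ≤ cc.xi * |Dw cc σ u| := by
  apply Metric.diam_le_of_forall_dist_le (mul_nonneg (xi_pos cc).le (abs_nonneg _))
  rintro p ⟨x, hx, rfl⟩ q ⟨y, hy, rfl⟩
  obtain ⟨z, hz, hzeq⟩ := mvt (wm_hasDeriv cc σ) hy hx
  have hxy1 : |x - y| ≤ 1 := by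
    rw [abs_le]
    constructor <;> [linarith [hy.2, hx.1]; linarith [hy.1, hx.2]]
  rw [Real.dist_eq, hzeq, abs_mul]
  calc |Dw cc σ z| * |x - y| ≤ (cc.xi * |Dw cc σ u|) * 1 := by
        apply mul_le_mul (Dw_ratio cc σ hz hu) hxy1 (abs_nonneg _)
          (mul_nonneg (xi_pos cc).le (abs_nonneg _))
    _ = cc.xi * |Dw cc σ u| := mul_one _

lemma le_diam (σ : List (Fin cc.N)) {u : ℝ} (hu : u ∈ Icc (0:ℝ) 1) :
    |Dw cc σ u| ≤ cc.xi * cc.diamJ σ := by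
  obtain ⟨z, hz, hzeq⟩ := mvt (wm_hasDeriv cc σ) (zero_mem) (one_mem)
  have hDz : |Dw cc σ z| = |cc.wordMap σ 1 - cc.wordMap σ 0| := by
    rw [hzeq]; simp
  have hb : Bornology.IsBounded (cc.Jc σ) := by
    apply (Metric.isBounded_Icc (0:ℝ) 1).subset
    rintro p ⟨x, hx, rfl⟩
    exact wm_mem cc σ x hx
  have hdist : |cc.wordMap σ 1 - cc.wordMap σ 0| ≤ cc.diamJ σ := by
    rw [← Real.dist_eq]
    exact Metric.dist_le_diam_of_mem hb ⟨1, one_mem, rfl⟩ ⟨0, zero_mem, rfl⟩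
  calc |Dw cc σ u| ≤ cc.xi * |Dw cc σ z| := Dw_ratio cc σ hu hz
    _ = cc.xi * |cc.wordMap σ 1 - cc.wordMap σ 0| := by rw [hDz]
    _ ≤ cc.xi * cc.diamJ σ := mul_le_mul_of_nonneg_left hdist (xi_pos cc).le

lemma wm_append : ∀ (σ τ : List (Fin cc.N)) (u : ℝ),
    cc.wordMap (σ ++ τ) u = cc.wordMap σ (cc.wordMap τ u)
  | [], _, _ => rfl
  | j :: ρ, τ, u => by
    show cc.φ j (cc.wordMap (ρ ++ τ) u) = cc.φ j (cc.wordMap ρ (cc.wordMap τ u))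
    rw [wm_append ρ τ u]

lemma Dw_append : ∀ (σ τ : List (Fin cc.N)) (u : ℝ),
    Dw cc (σ ++ τ) u = Dw cc σ (cc.wordMap τ u) * Dw cc τ u
  | [], τ, u => by simp [Dw]
  | j :: ρ, τ, u => by
    show deriv (cc.φ j) (cc.wordMap (ρ ++ τ) u) * Dw cc (ρ ++ τ) u
      = deriv (cc.φ j) (cc.wordMap ρ (cc.wordMap τ u)) * Dw cc ρ (cc.wordMap τ u) * Dw cc τ u
    rw [wm_append cc ρ τ u, Dw_append ρ τ u]
    ring

lemma diamJ_nonneg (σ : List (Fin cc.N)) : 0 ≤ cc.diamJ σ := Metric.diam_nonneg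

lemma diam_append_le (σ τ : List (Fin cc.N)) :
    cc.diamJ (σ ++ τ) ≤ cc.xi ^ 3 * (cc.diamJ σ * cc.diamJ τ) := by
  have hw : cc.wordMap τ 0 ∈ Icc (0:ℝ) 1 := wm_mem cc τ 0 (zero_mem)
  have hx := xi_pos cc
  calc cc.diamJ (σ ++ τ) ≤ cc.xi * |Dw cc (σ ++ τ) 0| := diam_le cc _ (zero_mem)
    _ = cc.xi * (|Dw cc σ (cc.wordMap τ 0)| * |Dw cc τ 0|) := by
        rw [Dw_append cc σ τ 0, abs_mul]
    _ ≤ cc.xi * ((cc.xi * cc.diamJ σ) * (cc.xi * cc.diamJ τ)) := by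
        apply mul_le_mul_of_nonneg_left _ hx.le
        exact mul_le_mul (le_diam cc σ hw) (le_diam cc τ (zero_mem)) (abs_nonneg _)
          (mul_nonneg (xi_pos cc).le (diamJ_nonneg cc σ))
    _ = cc.xi ^ 3 * (cc.diamJ σ * cc.diamJ τ) := by ring

lemma le_diam_append (σ τ : List (Fin cc.N)) :
    cc.diamJ σ * cc.diamJ τ ≤ cc.xi ^ 3 * cc.diamJ (σ ++ τ) := by
  have hw : cc.wordMap τ 0 ∈ Icc (0:ℝ) 1 := wm_mem cc τ 0 (zero_mem)
  have hx := xi_pos cc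
  calc cc.diamJ σ * cc.diamJ τ
      ≤ (cc.xi * |Dw cc σ (cc.wordMap τ 0)|) * (cc.xi * |Dw cc τ 0|) := by
        exact mul_le_mul (diam_le cc σ hw) (diam_le cc τ (zero_mem)) (diamJ_nonneg cc τ)
          (mul_nonneg (xi_pos cc).le (abs_nonneg _))
    _ = cc.xi ^ 2 * |Dw cc (σ ++ τ) 0| := by rw [Dw_append cc σ τ 0, abs_mul]; ring
    _ ≤ cc.xi ^ 2 * (cc.xi * cc.diamJ (σ ++ τ)) := by
        apply mul_le_mul_of_nonneg_left (le_diam cc _ (zero_mem)) (pow_nonneg (xi_pos cc).le 2)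
    _ = cc.xi ^ 3 * cc.diamJ (σ ++ τ) := by ring

end CCAux

theorem gibbs_quasi_multiplicative (cc : CookieCutter) (Q : ℝ → ℝ)
    (hQ : ∀ t : ℝ, Filter.Tendsto
      (fun k : ℕ => (1 / (k : ℝ)) * Real.log
        (∑ σ : Fin k → Fin cc.N, cc.φnorm (List.ofFn σ) ^ t))
      Filter.atTop (nhds (Q t)))
    (h : ℝ) (hh0 : 0 < h) (hQh : Q h = 0)
    (μ : MeasureTheory.Measure ℝ) (hμ : cc.IsGibbsLike μ h) :
    1 < cc.Lconst h ∧
    ∀ σ τ : List (Fin cc.N), σ ≠ [] → τ ≠ [] →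
      (cc.Lconst h)⁻¹ * (μ (cc.Jc σ)).toReal * (μ (cc.Jc τ)).toReal ≤
        (μ (cc.Jc (σ ++ τ))).toReal ∧
      (μ (cc.Jc (σ ++ τ))).toReal ≤
        cc.Lconst h * (μ (cc.Jc σ)).toReal * (μ (cc.Jc τ)).toReal := by
  obtain ⟨-, -, hG⟩ := hμ
  have hξ1 : 1 < cc.xi := CCAux.xi_gt_one cc
  have hξ0 : 0 < cc.xi := CCAux.xi_pos cc
  have hη1 : 1 < cc.eta h := by
    unfold CookieCutter.eta
    exact (Real.one_lt_rpow_iff_of_pos hξ0).mpr (Or.inl ⟨hξ1, by positivity⟩)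
  have hη0 : 0 < cc.eta h := lt_trans one_pos hη1
  have hX1 : 1 < cc.xi ^ ((3:ℝ) * h) :=
    (Real.one_lt_rpow_iff_of_pos hξ0).mpr (Or.inl ⟨hξ1, by positivity⟩)
  have hX0 : 0 < cc.xi ^ ((3:ℝ) * h) := lt_trans one_pos hX1
  have hpow : cc.xi ^ ((3:ℝ) * h) = (cc.xi ^ 3) ^ h := by
    rw [show ((3:ℝ)) = ((3:ℕ):ℝ) by norm_num, Real.rpow_mul hξ0.le, Real.rpow_natCast]
  have hL0 : 0 < cc.Lconst h := by
    unfold CookieCutter.Lconst; positivity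
  have hL1 : 1 < cc.Lconst h := by
    unfold CookieCutter.Lconst
    have h3 : 1 < cc.eta h ^ 3 := one_lt_pow₀ hη1 (by norm_num)
    nlinarith
  refine ⟨hL1, fun σ τ hσ hτ => ?_⟩
  have hστ : σ ++ τ ≠ [] := fun hcon => hσ (List.append_eq_nil_iff.mp hcon).1
  obtain ⟨hσl, hσu⟩ := hG σ hσ
  obtain ⟨hτl, hτu⟩ := hG τ hτ
  obtain ⟨hstl, hstu⟩ := hG (σ ++ τ) hστ
  set dσ := cc.diamJ σ
  set dτ := cc.diamJ τ
  set dst := cc.diamJ (σ ++ τ)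
  set mσ := (μ (cc.Jc σ)).toReal
  set mτ := (μ (cc.Jc τ)).toReal
  set mst := (μ (cc.Jc (σ ++ τ))).toReal
  have hdσ0 : 0 ≤ dσ := CCAux.diamJ_nonneg cc σ
  have hdτ0 : 0 ≤ dτ := CCAux.diamJ_nonneg cc τ
  have hdst0 : 0 ≤ dst := CCAux.diamJ_nonneg cc (σ ++ τ)
  have hmσ0 : 0 ≤ mσ := ENNReal.toReal_nonneg
  have hmτ0 : 0 ≤ mτ := ENNReal.toReal_nonneg
  have hmst0 : 0 ≤ mst := ENNReal.toReal_nonneg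
  have hσ' : dσ ^ h ≤ cc.eta h * mσ := (inv_mul_le_iff₀ hη0).mp hσl
  have hτ' : dτ ^ h ≤ cc.eta h * mτ := (inv_mul_le_iff₀ hη0).mp hτl
  have hst' : dst ^ h ≤ cc.eta h * mst := (inv_mul_le_iff₀ hη0).mp hstl
  constructor
  · -- lower bound
    rw [mul_assoc, inv_mul_le_iff₀ hL0]
    calc mσ * mτ ≤ (cc.eta h * dσ ^ h) * (cc.eta h * dτ ^ h) :=
          mul_le_mul hσu hτu hmτ0 (by positivity)
      _ = cc.eta h ^ 2 * (dσ * dτ) ^ h := by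
          rw [Real.mul_rpow hdσ0 hdτ0]; ring
      _ ≤ cc.eta h ^ 2 * (cc.xi ^ 3 * dst) ^ h := by
          apply mul_le_mul_of_nonneg_left _ (by positivity)
          exact Real.rpow_le_rpow (mul_nonneg hdσ0 hdτ0) (CCAux.le_diam_append cc σ τ) hh0.le
      _ = cc.eta h ^ 2 * (cc.xi ^ ((3:ℝ) * h) * dst ^ h) := by
          rw [Real.mul_rpow (by positivity) hdst0, ← hpow]
      _ ≤ cc.eta h ^ 2 * (cc.xi ^ ((3:ℝ) * h) * (cc.eta h * mst)) := by
          apply mul_le_mul_of_nonneg_left _ (by positivity)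
          exact mul_le_mul_of_nonneg_left hst' hX0.le
      _ = cc.Lconst h * mst := by
          show _ = cc.eta h ^ 3 * cc.xi ^ ((3:ℝ) * h) * mst
          ring
  · -- upper bound
    have hd_up : dst ^ h ≤ cc.xi ^ ((3:ℝ) * h) * (dσ ^ h * dτ ^ h) := by
      have h1 : dst ^ h ≤ (cc.xi ^ 3 * (dσ * dτ)) ^ h :=
        Real.rpow_le_rpow hdst0 (CCAux.diam_append_le cc σ τ) hh0.le
      rw [Real.mul_rpow (by positivity) (mul_nonneg hdσ0 hdτ0),
        Real.mul_rpow hdσ0 hdτ0, ← hpow] at h1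
      exact h1
    calc mst ≤ cc.eta h * dst ^ h := hstu
      _ ≤ cc.eta h * (cc.xi ^ ((3:ℝ) * h) * (dσ ^ h * dτ ^ h)) :=
          mul_le_mul_of_nonneg_left hd_up hη0.le
      _ ≤ cc.eta h * (cc.xi ^ ((3:ℝ) * h) * ((cc.eta h * mσ) * (cc.eta h * mτ))) := by
          apply mul_le_mul_of_nonneg_left _ hη0.le
          apply mul_le_mul_of_nonneg_left _ hX0.le
          exact mul_le_mul hσ' hτ' (Real.rpow_nonneg hdτ0 h) (by positivity)
      _ = cc.Lconst h * mσ * mτ := by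
          show _ = cc.eta h ^ 3 * cc.xi ^ ((3:ℝ) * h) * mσ * mτ
          ring
end
end
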